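/- Let P ⊂ ℝ^d be a finite set partitioned into clusters C_1,…,C_k with centers a_1,…,a_k, write A = {a_1,…,a_k} and cost(C_j,A) = ∑_{p∈C_j} ‖p−a_j‖². Let ε ∈ (0,1/2] and let Ω ⊆ P be a finite set with non-negative weights (w_q)_{q∈Ω} satisfying: (P1) ∑_{q∈Ω∩C_j} w_q ∈ [(1−ε)|C_j|, (1+ε)|C_j|] for each j, and (P3) ∑_{q∈Ω∩C_j} w_q·‖q−a_j‖² ∈ [(1−ε)cost(C_j,A), (1+ε)cost(C_j,A)] for each j. Then for every finite set S of centers in ℝ^d, cost_Ω(P,S) ≤ 9·cost(P,A) + 6·cost(P,S). -/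

import Mathlib

/-!
Split `Ω` and `P` along the clusters. Inside cluster `j`, the relaxed triangle inequality
`cost(x,S) ≤ 2‖x - y‖² + 2 cost(y,S)` with `y = a_j` bounds the weighted cost of `Ω ∩ C_j` by
`2 ∑ w_q ‖q - a_j‖² + 2 (∑ w_q) cost(a_j,S) ≤ 2(1+ε) cost(C_j,A) + 2(1+ε) |C_j| cost(a_j,S)`,
and, used the other way round with `x = a_j`, `|C_j| cost(a_j,S) ≤ 2 cost(C_j,A) + 2 cost(C_j,S)`.
Together this gives `(1+ε)(6 cost(C_j,A) + 4 cost(C_j,S))`, and `1 + ε ≤ 3/2`.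
-/

open Finset

noncomputable section

/-- `ℝ^d` as a Euclidean space. -/
abbrev Pt (d : ℕ) := EuclideanSpace ℝ (Fin d)

/-- `cost(p,S) = min_{s ∈ S} ‖p - s‖²`. -/
noncomputable def pcost {d : ℕ} (p : Pt d) (S : Finset (Pt d)) : ℝ :=
  sInf ((fun s => ‖p - s‖ ^ 2) '' (S : Set (Pt d)))

/-- `cost(P,S) = ∑_{p ∈ P} min_{s ∈ S} ‖p - s‖²`. -/
noncomputable def scost {d : ℕ} (P S : Finset (Pt d)) : ℝ :=
  ∑ p ∈ P, pcost p S

variable {d : ℕ}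

lemma pcost_nonneg (p : Pt d) (S : Finset (Pt d)) : 0 ≤ pcost p S :=
  Real.sInf_nonneg <| Set.forall_mem_image.2 fun _ _ => by positivity

lemma pcost_le_of_mem (p : Pt d) {S : Finset (Pt d)} {s : Pt d} (hs : s ∈ S) :
    pcost p S ≤ ‖p - s‖ ^ 2 :=
  csInf_le ⟨0, Set.forall_mem_image.2 fun _ _ => by positivity⟩ ⟨s, hs, rfl⟩

lemma pcost_le_two_mul_sq_norm_sub_add (x y : Pt d) (S : Finset (Pt d)) :
    pcost x S ≤ 2 * ‖x - y‖ ^ 2 + 2 * pcost y S := by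
  rcases S.eq_empty_or_nonempty with rfl | hS
  · simp [pcost]
  have hvia : ∀ s ∈ S, pcost x S ≤ 2 * ‖x - y‖ ^ 2 + 2 * ‖y - s‖ ^ 2 := fun s hs =>
    calc pcost x S ≤ ‖x - s‖ ^ 2 := pcost_le_of_mem x hs
      _ ≤ (‖x - y‖ + ‖y - s‖) ^ 2 := by gcongr; exact norm_sub_le_norm_sub_add_norm_sub x y s
      _ ≤ 2 * ‖x - y‖ ^ 2 + 2 * ‖y - s‖ ^ 2 := by linarith [add_sq_le (a := ‖x - y‖) (b := ‖y - s‖)]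
  have : (pcost x S - 2 * ‖x - y‖ ^ 2) / 2 ≤ pcost y S :=
    le_csInf ((coe_nonempty.2 hS).image _) <| Set.forall_mem_image.2 fun s hs => by
      linarith [hvia s hs]
  linarith

lemma sum_mul_pcost_le (Q : Finset (Pt d)) {w : Pt d → ℝ} (hw : ∀ q ∈ Q, 0 ≤ w q)
    (c : Pt d) (S : Finset (Pt d)) :
    ∑ q ∈ Q, w q * pcost q S
      ≤ 2 * ∑ q ∈ Q, w q * ‖q - c‖ ^ 2 + 2 * (∑ q ∈ Q, w q) * pcost c S := by
  rw [mul_sum, mul_sum, sum_mul, ← sum_add_distrib]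
  refine sum_le_sum fun q hq => ?_
  linarith [mul_le_mul_of_nonneg_left (pcost_le_two_mul_sq_norm_sub_add q c S) (hw q hq)]

lemma card_mul_pcost_le (R : Finset (Pt d)) (c : Pt d) (S : Finset (Pt d)) :
    #R * pcost c S ≤ 2 * ∑ p ∈ R, ‖p - c‖ ^ 2 + 2 * scost R S := by
  rw [scost, ← nsmul_eq_mul, ← sum_const, mul_sum, mul_sum, ← sum_add_distrib]
  refine sum_le_sum fun p _ => ?_
  simpa [norm_sub_rev] using pcost_le_two_mul_sq_norm_sub_add c p S

lemma sum_mul_pcost_le_of_size_cost_le {Q R : Finset (Pt d)} {w : Pt d → ℝ} {c : Pt d} {ε : ℝ}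
    (hε0 : 0 ≤ ε) (hε1 : ε ≤ 1 / 2) (hw : ∀ q ∈ Q, 0 ≤ w q)
    (hsize : ∑ q ∈ Q, w q ≤ (1 + ε) * #R)
    (hcost : ∑ q ∈ Q, w q * ‖q - c‖ ^ 2 ≤ (1 + ε) * ∑ p ∈ R, ‖p - c‖ ^ 2)
    (S : Finset (Pt d)) :
    ∑ q ∈ Q, w q * pcost q S ≤ 9 * ∑ p ∈ R, ‖p - c‖ ^ 2 + 6 * scost R S := by
  have hD : 0 ≤ ∑ p ∈ R, ‖p - c‖ ^ 2 := sum_nonneg fun _ _ => by positivity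
  have hE : 0 ≤ scost R S := sum_nonneg fun p _ => pcost_nonneg p S
  have hsize' := mul_le_mul_of_nonneg_right hsize (pcost_nonneg c S)
  have hcard := card_mul_pcost_le R c S
  calc ∑ q ∈ Q, w q * pcost q S
      ≤ 2 * ∑ q ∈ Q, w q * ‖q - c‖ ^ 2 + 2 * (∑ q ∈ Q, w q) * pcost c S :=
        sum_mul_pcost_le Q hw c S
    _ ≤ (1 + ε) * (6 * ∑ p ∈ R, ‖p - c‖ ^ 2 + 4 * scost R S) := by nlinarith
    _ ≤ 9 * ∑ p ∈ R, ‖p - c‖ ^ 2 + 6 * scost R S := by nlinarith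

theorem coreset_cost_upper_bound_under_eventE_general
    {d : ℕ} (k : ℕ) (ε : ℝ) (P : Finset (Pt d)) (cl : Pt d → Fin k)
    (a : Fin k → Pt d) (Ω : Finset (Pt d)) (w : Pt d → ℝ)
    (hε0 : 0 < ε) (hε1 : ε ≤ 1 / 2)
    (hw : ∀ q ∈ Ω, 0 ≤ w q)
    -- (P1) cluster size preservation
    (hP1 : ∀ j : Fin k,
      (1 - ε) * (((P.filter fun p => cl p = j).card : ℝ))
          ≤ ∑ q ∈ Ω.filter (fun q => cl q = j), w q ∧
      ∑ q ∈ Ω.filter (fun q => cl q = j), w q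
          ≤ (1 + ε) * (((P.filter fun p => cl p = j).card : ℝ)))
    -- (P3) cluster cost preservation
    (hP3 : ∀ j : Fin k,
      (1 - ε) * (∑ p ∈ P.filter (fun p => cl p = j), ‖p - a j‖ ^ 2)
          ≤ ∑ q ∈ Ω.filter (fun q => cl q = j), w q * ‖q - a j‖ ^ 2 ∧
      ∑ q ∈ Ω.filter (fun q => cl q = j), w q * ‖q - a j‖ ^ 2
          ≤ (1 + ε) * (∑ p ∈ P.filter (fun p => cl p = j), ‖p - a j‖ ^ 2)) :
    ∀ S : Finset (Pt d),
      (∑ q ∈ Ω, w q * pcost q S)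
        ≤ 9 * (∑ j : Fin k, ∑ p ∈ P.filter (fun p => cl p = j), ‖p - a j‖ ^ 2)
          + 6 * scost P S := by
  intro S
  have hP : scost P S = ∑ j, scost (P.filter fun p => cl p = j) S :=
    (sum_fiberwise P cl _).symm
  rw [← sum_fiberwise Ω cl, hP, mul_sum, mul_sum, ← sum_add_distrib]
  exact sum_le_sum fun j _ => sum_mul_pcost_le_of_size_cost_le hε0.le hε1
    (fun q hq => hw q (mem_filter.1 hq).1) (hP1 j).2 (hP3 j).2 S

/-- If a weighted subset `Ω ⊆ P` preserves the sizes (P1) and the costs (P3) of all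
clusters up to `1 ± ε`, then for every solution `S`,
`cost_Ω(P,S) ≤ 9·cost(P,A) + 6·cost(P,S)`. -/
theorem coreset_cost_upper_bound_under_eventE
    {d : ℕ} (k : ℕ) (ε : ℝ) (P : Finset (Pt d)) (cl : Pt d → Fin k)
    (a : Fin k → Pt d) (Ω : Finset (Pt d)) (w : Pt d → ℝ)
    (hε0 : 0 < ε) (hε1 : ε ≤ 1 / 2)
    (hΩ : Ω ⊆ P) (hw : ∀ q ∈ Ω, 0 ≤ w q)
    -- (P1) cluster size preservation
    (hP1 : ∀ j : Fin k,
      (1 - ε) * (((P.filter fun p => cl p = j).card : ℝ))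
          ≤ ∑ q ∈ Ω.filter (fun q => cl q = j), w q ∧
      ∑ q ∈ Ω.filter (fun q => cl q = j), w q
          ≤ (1 + ε) * (((P.filter fun p => cl p = j).card : ℝ)))
    -- (P3) cluster cost preservation
    (hP3 : ∀ j : Fin k,
      (1 - ε) * (∑ p ∈ P.filter (fun p => cl p = j), ‖p - a j‖ ^ 2)
          ≤ ∑ q ∈ Ω.filter (fun q => cl q = j), w q * ‖q - a j‖ ^ 2 ∧
      ∑ q ∈ Ω.filter (fun q => cl q = j), w q * ‖q - a j‖ ^ 2
          ≤ (1 + ε) * (∑ p ∈ P.filter (fun p => cl p = j), ‖p - a j‖ ^ 2)) :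
    ∀ S : Finset (Pt d),
      (∑ q ∈ Ω, w q * pcost q S)
        ≤ 9 * (∑ j : Fin k, ∑ p ∈ P.filter (fun p => cl p = j), ‖p - a j‖ ^ 2)
          + 6 * scost P S :=
  coreset_cost_upper_bound_under_eventE_general k ε P cl a Ω w hε0 hε1 hw hP1 hP3
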